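/- arXiv:1701.02879 — 5 statements merged into one kernel-verified Lean document; each statement's English description precedes it below -/
import Mathlib

section
/- Veinott's average overtaking relation ≿_V satisfies axiom A3: for every bounded real sequence u such that the long-run average ū = lim_{n→∞} (1/n)∑_{t=1}^n u_t exists, the sequence (ū,u) = (ū, u_1, u_2, …) satisfies (ū,u) ∼_V u, i.e., lim_{n→∞} (1/n)∑_{T=1}^n ∑_{t=1}^T ((ū,u)_t − u_t) = 0. -/
open Filter Finset Topology

/-- A bounded real sequence (an element of 𝒰). Index `t : ℕ` represents time `t+1`. -/
def Bdd (u : ℕ → ℝ) : Prop := ∃ C : ℝ, ∀ t, |u t| ≤ C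

/-- Partial sum `∑_{t=1}^n u_t`. -/
noncomputable def psum (u : ℕ → ℝ) (n : ℕ) : ℝ := ∑ t ∈ Finset.range n, u t

/-- Cesàro average `(1/n) ∑_{T=1}^n ∑_{t=1}^T u_t`. -/
noncomputable def cesaroAvg (u : ℕ → ℝ) (n : ℕ) : ℝ :=
  (∑ T ∈ Finset.range n, psum u (T + 1)) / n

/-- The series `∑ u_t` is Cesàro-summable. -/
def CesaroSummable (u : ℕ → ℝ) : Prop :=
  ∃ L : ℝ, Filter.Tendsto (cesaroAvg u) Filter.atTop (nhds L)

/-- The series `∑ u_t` has bounded partial sums. -/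
def BddPartialSums (u : ℕ → ℝ) : Prop := ∃ C : ℝ, ∀ n, |psum u n| ≤ C

/-- The long-run average of `u` exists and equals `a`. -/
def AvgTo (u : ℕ → ℝ) (a : ℝ) : Prop :=
  Filter.Tendsto (fun n : ℕ => psum u n / n) Filter.atTop (nhds a)

/-- The sequence `(c, u_1, u_2, …)`. -/
def cons (c : ℝ) (u : ℕ → ℝ) : ℕ → ℝ := fun t => if t = 0 then c else u (t - 1)

/-- The discounted sum `∑_{t=1}^∞ β^t d_t`. -/
noncomputable def discSum (d : ℕ → ℝ) (β : ℝ) : ℝ := ∑' t : ℕ, β ^ (t + 1) * d t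

/-- The Blackwell relation `u ≿_B v`. -/
def BlackwellGE (u v : ℕ → ℝ) : Prop :=
  0 ≤ Filter.liminf (fun β => discSum (u - v) β) (nhdsWithin 1 (Set.Iio 1))

/-- Veinott's average overtaking relation `u ≿_V v`. -/
def VeinottGE (u v : ℕ → ℝ) : Prop :=
  0 ≤ Filter.liminf (cesaroAvg (u - v)) Filter.atTop

/-- Reflexivity of the preference relation on 𝒰. -/
def ReflOn (R : (ℕ → ℝ) → (ℕ → ℝ) → Prop) : Prop := ∀ u, Bdd u → R u u

/-- Transitivity of the preference relation on 𝒰. -/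
def TransOn (R : (ℕ → ℝ) → (ℕ → ℝ) → Prop) : Prop :=
  ∀ u v w, Bdd u → Bdd v → Bdd w → R u v → R v w → R u w

/-- Strict preference `u ≻ v`. -/
def StrictPref (R : (ℕ → ℝ) → (ℕ → ℝ) → Prop) (u v : ℕ → ℝ) : Prop := R u v ∧ ¬ R v u

/-- Axiom A1: `u > v` implies `u ≻ v`. -/
def AxiomA1 (R : (ℕ → ℝ) → (ℕ → ℝ) → Prop) : Prop :=
  ∀ u v, Bdd u → Bdd v → (∀ t, v t ≤ u t) → (∃ t, v t < u t) → StrictPref R u v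

/-- Axiom A2: `u ≿ v` implies `u + α ≿ v + α`. -/
def AxiomA2 (R : (ℕ → ℝ) → (ℕ → ℝ) → Prop) : Prop :=
  ∀ u v α, Bdd u → Bdd v → Bdd α → R u v → R (u + α) (v + α)

/-- Axiom A3: if the long-run average `ū` exists then `(ū, u) ∼ u`. -/
def AxiomA3 (R : (ℕ → ℝ) → (ℕ → ℝ) → Prop) : Prop :=
  ∀ u a, Bdd u → AvgTo u a → (R (cons a u) u ∧ R u (cons a u))

/-- `w` is eventually periodic with period `p` from time `T` onward. -/
def EvPeriodicFrom (w : ℕ → ℝ) (p T : ℕ) : Prop := 1 ≤ p ∧ ∀ t, T ≤ t → w (t + p) = w t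

/-- `w` is eventually periodic. -/
def EvPeriodic (w : ℕ → ℝ) : Prop := ∃ p T : ℕ, EvPeriodicFrom w p T

/-- The set 𝒰₊: bounded streams of the form `w + Δ`, `w` eventually periodic and
`∑ Δ_t` Cesàro-summable with bounded partial sums. -/
def UPlus (u : ℕ → ℝ) : Prop :=
  Bdd u ∧ ∃ w Δ : ℕ → ℝ, u = w + Δ ∧ EvPeriodic w ∧ CesaroSummable Δ ∧ BddPartialSums Δ

/-- An `S × S` row-stochastic matrix. -/
def RowStochastic {S : ℕ} (Q : Matrix (Fin S) (Fin S) ℝ) : Prop :=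
  (∀ i j, 0 ≤ Q i j) ∧ ∀ i, ∑ j, Q i j = 1

/-- 𝒰_stat: streams generated by stationary policies of finite MDPs,
`u_t = (Q^{t-1} · R)_s` (here `u t` is `u_{t+1}`, so `u t = (Q^t · R)_s`). -/
def UStat (u : ℕ → ℝ) : Prop :=
  ∃ (S : ℕ) (_ : 0 < S) (Q : Matrix (Fin S) (Fin S) ℝ) (R : Fin S → ℝ) (s : Fin S),
    RowStochastic Q ∧ ∀ t : ℕ, u t = ((Q ^ t).mulVec R) s

lemma psum_cons_sub (a : ℝ) (u : ℕ → ℝ) (T : ℕ) :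
    psum (cons a u - u) (T + 1) = a - u T := by
  induction T with
  | zero => simp [psum, _root_.cons]
  | succ T ih =>
      have : psum (cons a u - u) (T + 2)
          = psum (cons a u - u) (T + 1) + (cons a u - u) (T + 1) := by
        simp [psum, Finset.sum_range_succ]
        ring
      rw [this, ih]
      simp only [Pi.sub_apply, _root_.cons]
      norm_num

lemma cesaro_cons_sub (a : ℝ) (u : ℕ → ℝ) (n : ℕ) (hn : 1 ≤ n) :
    cesaroAvg (cons a u - u) n = a - psum u n / n := by
  have hsum : ∑ T ∈ Finset.range n, psum (cons a u - u) (T + 1)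
      = n * a - psum u n := by
    rw [Finset.sum_congr rfl (fun T _ => psum_cons_sub a u T)]
    simp [Finset.sum_sub_distrib, psum]
  have hn0 : (n : ℝ) ≠ 0 := Nat.cast_ne_zero.mpr (by omega)
  rw [cesaroAvg, hsum]
  field_simp

lemma tendsto_cons_sub (u : ℕ → ℝ) (a : ℝ) (ha : AvgTo u a) :
    Filter.Tendsto (cesaroAvg (cons a u - u)) Filter.atTop (nhds 0) := by
  have h : Filter.Tendsto (fun n : ℕ => a - psum u n / n) Filter.atTop (nhds 0) := by
    have := (tendsto_const_nhds (x := a) (f := Filter.atTop (α := ℕ))).sub ha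
    simpa using this
  refine h.congr' ?_
  filter_upwards [Filter.eventually_atTop.2 ⟨1, fun n hn => hn⟩] with n hn
  exact (cesaro_cons_sub a u n hn).symm

/-- Veinott's relation satisfies axiom A3: `(ū, u) ∼_V u`,
i.e. the Cesàro averages of `(ū,u) - u` tend to `0`. -/
theorem stmt_6 (u : ℕ → ℝ) (hu : Bdd u) (a : ℝ) (ha : AvgTo u a) :
    (VeinottGE (cons a u) u ∧ VeinottGE u (cons a u)) ∧
      Filter.Tendsto (cesaroAvg (cons a u - u)) Filter.atTop (nhds 0) := by
  have h := tendsto_cons_sub u a ha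
  have hneg : Filter.Tendsto (cesaroAvg (u - cons a u)) Filter.atTop (nhds 0) := by
    have heq : ∀ n, cesaroAvg (u - cons a u) n = -cesaroAvg (cons a u - u) n := by
      intro n
      simp only [cesaroAvg, psum]
      rw [← neg_div, ← Finset.sum_neg_distrib]
      congr 1
      refine Finset.sum_congr rfl fun T _ => ?_
      rw [← Finset.sum_neg_distrib]
      refine Finset.sum_congr rfl fun t _ => ?_
      simp [Pi.sub_apply]
    have := h.neg
    simp only [neg_zero] at this
    exact this.congr fun n => (heq n).symm
  refine ⟨⟨?_, ?_⟩, h⟩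
  · rw [VeinottGE, h.liminf_eq]
  · rw [VeinottGE, hneg.liminf_eq]
end

section
/- Let ≿ be a preference relation (reflexive and transitive) on the set 𝒰 of bounded real sequences satisfying axioms A1, A2 and A3. For all u, v ∈ 𝒰, if the series ∑_{t=1}^∞ (u_t − v_t) is Cesàro-summable and has bounded partial sums, then u ≿ v if and only if u ≿_V v. -/
open Filter Finset Topology

lemma bdd_neg {u : ℕ → ℝ} (h : Bdd u) : Bdd (-u) := by
  obtain ⟨C, hC⟩ := h
  exact ⟨C, fun t => by simpa using hC t⟩

lemma bdd_sub {u v : ℕ → ℝ} (hu : Bdd u) (hv : Bdd v) : Bdd (u - v) := by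
  obtain ⟨C, hC⟩ := hu; obtain ⟨D, hD⟩ := hv
  refine ⟨C + D, fun t => ?_⟩
  calc |(u - v) t| = |u t - v t| := rfl
    _ ≤ |u t| + |v t| := abs_sub _ _
    _ ≤ C + D := add_le_add (hC t) (hD t)

lemma bdd_cons {c : ℝ} {u : ℕ → ℝ} (h : Bdd u) : Bdd (cons c u) := by
  obtain ⟨C, hC⟩ := h
  refine ⟨max C |c|, fun t => ?_⟩
  cases t with
  | zero => simp [_root_.cons]
  | succ n => simpa [_root_.cons] using le_max_of_le_left (hC n)

lemma bdd_zero : Bdd (0 : ℕ → ℝ) := ⟨0, fun t => by simp⟩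

/-- if `∑ (u_t - v_t)` is Cesàro-summable with bounded partial
sums, then `u ≿ v ↔ u ≿_V v`. -/
theorem stmt_7 (R : (ℕ → ℝ) → (ℕ → ℝ) → Prop)
    (hrefl : ReflOn R) (htrans : TransOn R)
    (hA1 : AxiomA1 R) (hA2 : AxiomA2 R) (hA3 : AxiomA3 R)
    (u v : ℕ → ℝ) (hu : Bdd u) (hv : Bdd v)
    (hc : CesaroSummable (u - v)) (hb : BddPartialSums (u - v)) :
    R u v ↔ VeinottGE u v := by
  classical
  obtain ⟨L, hL⟩ := hc
  -- Veinott relation is equivalent to `0 ≤ L`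
  have hVein : VeinottGE u v ↔ 0 ≤ L := by
    unfold VeinottGE
    rw [hL.liminf_eq]
  rw [hVein]
  set d : ℕ → ℝ := u - v with hddef
  have hdb : Bdd d := bdd_sub hu hv
  set s : ℕ → ℝ := fun t => psum d (t + 1) with hsdef
  obtain ⟨C, hC⟩ := hb
  have hsb : Bdd s := ⟨C, fun t => hC (t + 1)⟩
  have havg : AvgTo s L := by
    have hEq : cesaroAvg d = fun n : ℕ => psum s n / n := by
      funext n
      simp [cesaroAvg, psum, hsdef]
    unfold AvgTo
    rw [← hEq]
    exact hL
  -- A3: (L, s) ∼ s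
  obtain ⟨h3a, h3b⟩ := hA3 s L hsb havg
  -- translate by -(cons 0 s)
  have hb0 : Bdd (cons 0 s) := bdd_cons hsb
  have hbn : Bdd (-(cons 0 s)) := bdd_neg hb0
  have hbLs : Bdd (cons L s) := bdd_cons hsb
  have hsub1 : s + -(cons 0 s) = d := by
    funext t
    cases t with
    | zero => simp [hsdef, _root_.cons, psum]
    | succ n =>
        have : psum d (n + 1 + 1) - psum d (n + 1) = d (n + 1) := by
          simp [psum, Finset.sum_range_succ]
        simpa [hsdef, _root_.cons, sub_eq_add_neg] using this
  have hsub2 : cons L s + -(cons 0 s) = cons L 0 := by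
    funext t
    cases t with
    | zero => simp [_root_.cons]
    | succ n => simp [_root_.cons]
  set e : ℕ → ℝ := cons L 0 with hedef
  have hbe : Bdd e := bdd_cons bdd_zero
  have hde : R d e := by
    have := hA2 s (cons L s) (-(cons 0 s)) hsb hbLs hbn h3b
    rwa [hsub1, hsub2] at this
  have hed : R e d := by
    have := hA2 (cons L s) s (-(cons 0 s)) hbLs hsb hbn h3a
    rwa [hsub1, hsub2] at this
  -- R u v ↔ R d 0
  have hb0' : Bdd (0 : ℕ → ℝ) := bdd_zero
  have huv_d : R u v ↔ R d 0 := by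
    constructor
    · intro h
      have := hA2 u v (-v) hu hv (bdd_neg hv) h
      have h1 : u + -v = d := by funext t; simp [hddef, sub_eq_add_neg]
      have h2 : v + -v = (0 : ℕ → ℝ) := by funext t; simp
      rwa [h1, h2] at this
    · intro h
      have := hA2 d 0 v hdb hb0' hv h
      have h1 : d + v = u := by funext t; simp [hddef]
      have h2 : (0 : ℕ → ℝ) + v = v := by funext t; simp
      rwa [h1, h2] at this
  rw [huv_d]
  constructor
  · intro h
    by_contra hneg
    push_neg at hneg
    -- 0 ≻ e by A1
    have hstrict : StrictPref R 0 e := by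
      refine hA1 0 e hb0' hbe (fun t => ?_) ⟨0, ?_⟩
      · cases t with
        | zero => simpa [hedef, _root_.cons] using hneg.le
        | succ n => simp [hedef, _root_.cons]
      · simpa [hedef, _root_.cons] using hneg
    exact hstrict.2 (htrans e d 0 hbe hdb hb0' hed h)
  · intro hLpos
    rcases eq_or_lt_of_le hLpos with hL0 | hL0
    · have he0 : e = (0 : ℕ → ℝ) := by
        funext t
        cases t with
        | zero => simp [hedef, _root_.cons, ← hL0]
        | succ n => simp [hedef, _root_.cons]
      rw [he0] at hde
      exact hde
    · have hstrict : StrictPref R e 0 := by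
        refine hA1 e 0 hbe hb0' (fun t => ?_) ⟨0, ?_⟩
        · cases t with
          | zero => simpa [hedef, _root_.cons] using hL0.le
          | succ n => simp [hedef, _root_.cons]
        · simpa [hedef, _root_.cons] using hL0
      exact htrans d e 0 hdb hbe hb0' hde hstrict.1
end

section
/- Let ≿ be a preference relation (reflexive and transitive) on the set 𝒰 of bounded real sequences satisfying axioms A1, A2 and A3. For all u, v ∈ 𝒰, if the series ∑_{t=1}^∞ (u_t − v_t) is Cesàro-summable and has bounded partial sums, then u ≿ v if and only if u ≿_B v, where u ≿_B v iff liminf_{β→1⁻} ∑_{t=1}^∞ β^t (u_t − v_t) ≥ 0. -/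
/-!
Write `d = u - v`, `S` for its partial sums and `L` for its Cesàro sum; by A2, `u ≿ v` iff `d ≿ 0`.
The bounded stream `S` has long-run average `L`, so A3 gives `(L, S) ∼ S`, and adding `d - S` (A2)
turns this into `(L, 0, 0, …) ∼ d`. By A1, `(L, 0, 0, …) ≿ 0` iff `L ≥ 0`.

On the Blackwell side, two summations by parts write `∑ β^(t+1) d_t` as
`∑ (1 - β)² (n + 1) β^(n + 1) σ_(n+1)`, an average of the Cesàro means `σ` with nonnegative weights
of total mass `β`, each of which tends to `0` as `β → 1⁻`. So it tends to `L`, and `u ≿_B v` iff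
`L ≥ 0` as well.
-/

open Filter Finset Topology

theorem Bdd.zero : Bdd 0 := ⟨0, fun _ => by simp⟩

theorem Bdd.neg {a : ℕ → ℝ} (ha : Bdd a) : Bdd (-a) := by
  obtain ⟨C, hC⟩ := ha
  exact ⟨C, fun t => by simpa using hC t⟩

theorem Bdd.add {a b : ℕ → ℝ} (ha : Bdd a) (hb : Bdd b) : Bdd (a + b) := by
  obtain ⟨C, hC⟩ := ha
  obtain ⟨D, hD⟩ := hb
  exact ⟨C + D, fun t => (abs_add_le _ _).trans (add_le_add (hC t) (hD t))⟩

theorem Bdd.sub {a b : ℕ → ℝ} (ha : Bdd a) (hb : Bdd b) : Bdd (a - b) := by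
  simpa [sub_eq_add_neg] using ha.add hb.neg

theorem Bdd.cons {a : ℕ → ℝ} (c : ℝ) (ha : Bdd a) : Bdd (cons c a) := by
  obtain ⟨C, hC⟩ := ha
  refine ⟨max |c| C, fun t => ?_⟩
  cases t with
  | zero => simp [_root_.cons]
  | succ t => simpa [_root_.cons] using (hC t).trans (le_max_right _ _)

@[simp]
theorem psum_zero (a : ℕ → ℝ) : psum a 0 = 0 := rfl

theorem psum_succ (a : ℕ → ℝ) (n : ℕ) : psum a (n + 1) = psum a n + a n :=
  Finset.sum_range_succ a n

theorem BddPartialSums.bdd {d : ℕ → ℝ} (hS : BddPartialSums d) : Bdd d := by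
  obtain ⟨C, hC⟩ := hS
  refine ⟨C + C, fun t => ?_⟩
  have hdt : d t = psum d (t + 1) - psum d t := by rw [psum_succ]; ring
  rw [hdt]
  exact (abs_sub _ _).trans (add_le_add (hC _) (hC _))

theorem cons_add_sub_psum (d : ℕ → ℝ) (c : ℝ) :
    cons c (fun t => psum d (t + 1)) + (d - fun t => psum d (t + 1)) = cons c 0 := by
  funext t
  cases t with
  | zero => simp [_root_.cons, psum_succ]
  | succ t => simp [_root_.cons, psum_succ (n := t + 1)]

section Preference

variable {R : (ℕ → ℝ) → (ℕ → ℝ) → Prop}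

theorem AxiomA2.add_iff (hA2 : AxiomA2 R) {a b α : ℕ → ℝ} (ha : Bdd a) (hb : Bdd b)
    (hα : Bdd α) : R (a + α) (b + α) ↔ R a b :=
  ⟨fun h => by simpa using hA2 _ _ _ (ha.add hα) (hb.add hα) hα.neg h, hA2 a b α ha hb hα⟩

theorem AxiomA2.iff_sub_zero (hA2 : AxiomA2 R) {u v : ℕ → ℝ} (hu : Bdd u) (hv : Bdd v) :
    R u v ↔ R (u - v) 0 := by
  rw [← hA2.add_iff hu hv hv.neg]
  simp [sub_eq_add_neg]

theorem TransOn.iff_of_equiv_left (htrans : TransOn R) {a b c : ℕ → ℝ} (ha : Bdd a)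
    (hb : Bdd b) (hc : Bdd c) (hab : R a b) (hba : R b a) : R a c ↔ R b c :=
  ⟨htrans b a c hb ha hc hba, htrans a b c ha hb hc hab⟩

theorem AxiomA3.equiv_cons_of_cesaro (hA2 : AxiomA2 R) (hA3 : AxiomA3 R) {d : ℕ → ℝ} {L : ℝ}
    (hS : BddPartialSums d) (hL : Tendsto (cesaroAvg d) atTop (𝓝 L)) :
    R d (cons L 0) ∧ R (cons L 0) d := by
  set S : ℕ → ℝ := fun t => psum d (t + 1)
  have hSb : Bdd S := hS.imp fun C hC t => hC (t + 1)
  have hdS : Bdd (d - S) := hS.bdd.sub hSb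
  -- `cesaroAvg d` is, by definition, the running average of `S`.
  obtain ⟨hLS, hSL⟩ := hA3 S L hSb hL
  rw [← add_sub_cancel S d, ← cons_add_sub_psum d L]
  exact ⟨hA2 _ _ _ hSb (hSb.cons L) hdS hSL, hA2 _ _ _ (hSb.cons L) hSb hdS hLS⟩

theorem cons_zero_pref_zero_iff (hrefl : ReflOn R) (hA1 : AxiomA1 R) (L : ℝ) :
    R (cons L 0) 0 ↔ 0 ≤ L := by
  rcases lt_trichotomy L 0 with hL | rfl | hL
  · refine iff_of_false (hA1 0 _ Bdd.zero (Bdd.zero.cons L) (fun t => ?_) ⟨0, ?_⟩).2 hL.not_ge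
    · cases t <;> simp [_root_.cons, hL.le]
    · simpa [_root_.cons] using hL
  · have h00 : cons 0 (0 : ℕ → ℝ) = 0 := by
      funext t
      simp [_root_.cons]
    simpa [h00] using hrefl 0 Bdd.zero
  · refine iff_of_true (hA1 _ 0 (Bdd.zero.cons L) Bdd.zero (fun t => ?_) ⟨0, ?_⟩).1 hL.le
    · cases t <;> simp [_root_.cons, hL.le]
    · simpa [_root_.cons] using hL

theorem pref_zero_iff_cesaro_nonneg (hrefl : ReflOn R) (htrans : TransOn R) (hA1 : AxiomA1 R)
    (hA2 : AxiomA2 R) (hA3 : AxiomA3 R) {d : ℕ → ℝ} {L : ℝ} (hS : BddPartialSums d)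
    (hL : Tendsto (cesaroAvg d) atTop (𝓝 L)) : R d 0 ↔ 0 ≤ L := by
  obtain ⟨hde, hed⟩ := hA3.equiv_cons_of_cesaro hA2 hS hL
  rw [← cons_zero_pref_zero_iff hrefl hA1 L]
  exact htrans.iff_of_equiv_left hS.bdd (Bdd.zero.cons L) Bdd.zero hde hed

end Preference

theorem Summable.mul_of_tendsto {w c : ℕ → ℝ} {L : ℝ} (hw : Summable w)
    (hc : Tendsto c atTop (𝓝 L)) : Summable fun n => w n * c n := by
  obtain ⟨B, hB⟩ :=
    (isBounded_iff_forall_norm_le (E := ℝ)).1 (Metric.isBounded_range_of_tendsto c hc)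
  refine .of_norm_bounded (hw.abs.mul_right B) fun n => ?_
  rw [norm_mul, Real.norm_eq_abs]
  exact mul_le_mul_of_nonneg_left (hB _ ⟨n, rfl⟩) (abs_nonneg _)

theorem tendsto_tsum_mul_of_tendsto_zero {ι : Type*} {l : Filter ι} {w : ι → ℕ → ℝ}
    {c : ℕ → ℝ} (hw : ∀ᶠ i in l, (∀ n, 0 ≤ w i n) ∧ Summable (w i))
    (hw_tsum : Tendsto (fun i => ∑' n, w i n) l (𝓝 1))
    (hw_zero : ∀ n, Tendsto (fun i => w i n) l (𝓝 0)) (hc : Tendsto c atTop (𝓝 0)) :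
    Tendsto (fun i => ∑' n, w i n * c n) l (𝓝 0) := by
  rw [Metric.tendsto_nhds]
  intro ε hε
  obtain ⟨N, hN⟩ := eventually_atTop.1
    (hc.eventually (Metric.closedBall_mem_nhds 0 (by positivity : 0 < ε / 4)))
  have hhead : Tendsto (fun i => ∑ n ∈ range N, w i n * |c n|) l (𝓝 0) := by
    simpa using tendsto_finsetSum _ fun n _ => (hw_zero n).mul_const |c n|
  filter_upwards [hw, hhead.eventually (gt_mem_nhds (by positivity : 0 < ε / 2)),
    hw_tsum.eventually (gt_mem_nhds one_lt_two)] with i ⟨hpos, hsum⟩ hhead_i htsum_i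
  have htail : |∑' n, w i (n + N) * c (n + N)| ≤ ε / 4 * ∑' n, w i n := by
    have hle : ∑' n, w i (n + N) ≤ ∑' n, w i n := by
      rw [← hsum.sum_add_tsum_nat_add N, le_add_iff_nonneg_left]
      exact sum_nonneg fun n _ => hpos n
    refine (tsum_of_norm_bounded (f := fun n => w i (n + N) * c (n + N))
      (((summable_nat_add_iff (f := w i) N).2 hsum).hasSum.mul_left (ε / 4)) fun n => ?_).trans
      (by gcongr)
    rw [norm_mul, Real.norm_eq_abs, Real.norm_eq_abs, abs_of_nonneg (hpos _), mul_comm (ε / 4)]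
    exact mul_le_mul_of_nonneg_left (by simpa using hN (n + N) (by omega)) (hpos _)
  rw [Real.dist_eq, sub_zero, ← (hsum.mul_of_tendsto hc).sum_add_tsum_nat_add N]
  calc |∑ n ∈ range N, w i n * c n + ∑' n, w i (n + N) * c (n + N)|
      ≤ ∑ n ∈ range N, w i n * |c n| + ε / 4 * ∑' n, w i n := by
        refine (abs_add_le _ _).trans (add_le_add ((abs_sum_le_sum_abs _ _).trans_eq ?_) htail)
        simp_rw [abs_mul, abs_of_nonneg (hpos _)]
    _ < ε / 2 + ε / 4 * 2 := by gcongr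
    _ = ε := by ring

/-- Silverman–Toeplitz theorem for nonnegative weights. -/
theorem tendsto_tsum_mul_of_tendsto {ι : Type*} {l : Filter ι} {w : ι → ℕ → ℝ} {c : ℕ → ℝ}
    {L : ℝ} (hw : ∀ᶠ i in l, (∀ n, 0 ≤ w i n) ∧ Summable (w i))
    (hw_tsum : Tendsto (fun i => ∑' n, w i n) l (𝓝 1))
    (hw_zero : ∀ n, Tendsto (fun i => w i n) l (𝓝 0)) (hc : Tendsto c atTop (𝓝 L)) :
    Tendsto (fun i => ∑' n, w i n * c n) l (𝓝 L) := by
  have hc₀ : Tendsto (fun n => c n - L) atTop (𝓝 0) := by simpa using hc.sub_const L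
  have hlim := (tendsto_tsum_mul_of_tendsto_zero hw hw_tsum hw_zero hc₀).add
    (hw_tsum.const_mul L)
  rw [zero_add, mul_one] at hlim
  refine hlim.congr' ?_
  filter_upwards [hw] with i ⟨_, hsum⟩
  rw [← tsum_mul_left, ← (hsum.mul_of_tendsto hc₀).tsum_add (hsum.mul_left L)]
  exact tsum_congr fun n => by ring

theorem abs_psum_le {a : ℕ → ℝ} {C : ℝ} (ha : ∀ n, |a n| ≤ C) (n : ℕ) : |psum a n| ≤ n * C := by
  refine (abs_sum_le_sum_abs _ _).trans ?_
  simpa using sum_le_sum fun i (_ : i ∈ range n) => ha i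

theorem summable_pow_mul_of_abs_le {a : ℕ → ℝ} {C β : ℝ} (ha : ∀ n, |a n| ≤ C) (hβ : |β| < 1) :
    Summable fun n => β ^ n * a n := by
  refine .of_norm_bounded ((summable_geometric_of_lt_one (abs_nonneg β) hβ).mul_right C)
    fun n => ?_
  rw [norm_mul, norm_pow, Real.norm_eq_abs, Real.norm_eq_abs]
  exact mul_le_mul_of_nonneg_left (ha n) (by positivity)

theorem summable_pow_mul_psum {a : ℕ → ℝ} {C β : ℝ} (ha : ∀ n, |a n| ≤ C) (hβ : |β| < 1) :
    Summable fun n => β ^ n * psum a n := by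
  have hβ' : ‖|β|‖ < 1 := by rwa [Real.norm_eq_abs, abs_abs]
  refine .of_norm_bounded ((summable_pow_mul_geometric_of_norm_lt_one 1 hβ').mul_left C)
    fun n => ?_
  rw [norm_mul, norm_pow, Real.norm_eq_abs, Real.norm_eq_abs, pow_one]
  calc |β| ^ n * |psum a n| ≤ |β| ^ n * (n * C) := by gcongr; exact abs_psum_le ha n
    _ = C * (n * |β| ^ n) := by ring

theorem tsum_pow_succ_mul_eq_one_sub_mul_tsum_psum (a : ℕ → ℝ) {β : ℝ}
    (h : Summable fun n => β ^ n * psum a n) :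
    ∑' n, β ^ (n + 1) * a n = (1 - β) * ∑' n, β ^ (n + 1) * psum a (n + 1) := by
  have hshift : Summable fun n => β ^ (n + 1) * psum a (n + 1) :=
    (summable_nat_add_iff (f := fun n => β ^ n * psum a n) 1).2 h
  have hzero : ∑' n, β ^ n * psum a n = ∑' n, β ^ (n + 1) * psum a (n + 1) := by
    simp [h.tsum_eq_zero_add]
  calc ∑' n, β ^ (n + 1) * a n
      = ∑' n, (β ^ (n + 1) * psum a (n + 1) - β * (β ^ n * psum a n)) :=
        tsum_congr fun n => by rw [psum_succ]; ring
    _ = (1 - β) * ∑' n, β ^ (n + 1) * psum a (n + 1) := by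
        rw [hshift.tsum_sub (h.mul_left β), tsum_mul_left, hzero]
        ring

theorem discSum_eq_tsum_mul_cesaroAvg {d : ℕ → ℝ} (hS : BddPartialSums d) {β : ℝ}
    (hβ : |β| < 1) :
    discSum d β = ∑' n, (1 - β) ^ 2 * ((n + 1) * β ^ (n + 1)) * cesaroAvg d (n + 1) := by
  obtain ⟨C, hC⟩ := hS
  have hS₂ : ∀ n, psum (fun T => psum d (T + 1)) (n + 1) = (n + 1) * cesaroAvg d (n + 1) := by
    intro n
    rw [cesaroAvg, Nat.cast_succ, mul_div_cancel₀ _ (by positivity)]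
    rfl
  rw [discSum, tsum_pow_succ_mul_eq_one_sub_mul_tsum_psum d (summable_pow_mul_of_abs_le hC hβ),
    tsum_pow_succ_mul_eq_one_sub_mul_tsum_psum (fun T => psum d (T + 1))
      (summable_pow_mul_psum (fun n => hC (n + 1)) hβ), ← mul_assoc, ← tsum_mul_left]
  exact tsum_congr fun n => by rw [hS₂]; ring

theorem hasSum_one_sub_sq_mul_succ_mul_pow_succ {β : ℝ} (hβ : β ∈ Set.Ioo (0 : ℝ) 1) :
    HasSum (fun n : ℕ => (1 - β) ^ 2 * ((n + 1) * β ^ (n + 1))) β := by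
  have hβ' : ‖β‖ < 1 := by rw [Real.norm_eq_abs, abs_of_pos hβ.1]; exact hβ.2
  have h : HasSum (fun n : ℕ => ((n : ℝ) + 1) * β ^ (n + 1)) (β / (1 - β) ^ 2) := by
    simpa using (hasSum_nat_add_iff' (f := fun n : ℕ => (n : ℝ) * β ^ n) 1).2
      (hasSum_coe_mul_geometric_of_norm_lt_one hβ')
  have hne : (1 - β) ^ 2 ≠ 0 := by have := hβ.2; positivity
  have := h.mul_left ((1 - β) ^ 2)
  rwa [mul_div_cancel₀ _ hne] at this

theorem tendsto_discSum_of_cesaro {d : ℕ → ℝ} {L : ℝ} (hS : BddPartialSums d)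
    (hL : Tendsto (cesaroAvg d) atTop (𝓝 L)) : Tendsto (discSum d) (𝓝[<] 1) (𝓝 L) := by
  have hβ : ∀ᶠ β in 𝓝[<] (1 : ℝ), β ∈ Set.Ioo 0 1 := Ioo_mem_nhdsLT one_pos
  have hw {β : ℝ} := hasSum_one_sub_sq_mul_succ_mul_pow_succ (β := β)
  refine (tendsto_tsum_mul_of_tendsto (hβ.mono fun β hβ' => ⟨fun n => ?_, (hw hβ').summable⟩)
    ?_ (fun n => ?_) (hL.comp (tendsto_add_atTop_nat 1))).congr' ?_
  · have := hβ'.1.le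
    positivity
  · refine (tendsto_nhdsWithin_of_tendsto_nhds tendsto_id).congr' ?_
    filter_upwards [hβ] with β hβ' using (hw hβ').tsum_eq.symm
  · have h : Continuous fun β : ℝ => (1 - β) ^ 2 * ((n + 1) * β ^ (n + 1)) := by fun_prop
    simpa using (h.tendsto 1).mono_left nhdsWithin_le_nhds
  · filter_upwards [hβ] with β hβ'
    rw [discSum_eq_tsum_mul_cesaroAvg hS (by rw [abs_of_pos hβ'.1]; exact hβ'.2)]
    rfl

/-- if `∑ (u_t - v_t)` is Cesàro-summable with bounded partial
sums, then `u ≿ v ↔ u ≿_B v`. -/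
theorem stmt_8 (R : (ℕ → ℝ) → (ℕ → ℝ) → Prop)
    (hrefl : ReflOn R) (htrans : TransOn R)
    (hA1 : AxiomA1 R) (hA2 : AxiomA2 R) (hA3 : AxiomA3 R)
    (u v : ℕ → ℝ) (hu : Bdd u) (hv : Bdd v)
    (hc : CesaroSummable (u - v)) (hb : BddPartialSums (u - v)) :
    R u v ↔ BlackwellGE u v := by
  obtain ⟨L, hL⟩ := hc
  rw [hA2.iff_sub_zero hu hv, pref_zero_iff_cesaro_nonneg hrefl htrans hA1 hA2 hA3 hb hL,
    BlackwellGE, (tendsto_discSum_of_cesaro hb hL).liminf_eq]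
end

section
/- Every stream generated by a stationary policy of a finite Markov decision process is asymptotically periodic: if S ≥ 1, Q is an S×S row-stochastic matrix, R ∈ ℝ^S, s ∈ {1,…,S}, and u_t = (Q^{t−1}·R)_s for all t ≥ 1, then there exist a real λ > 0, an eventually periodic sequence w, and a sequence Δ with lim_{t→∞} e^{λt} Δ_t = 0, such that u = w + Δ. -/
open Filter Finset Topology

/-! Complexify `Q` to `A`. As `Q` is stochastic, every power of `A` is a contraction for the sup
norm, so every eigenvalue `z` has `‖z‖ ≤ 1`. An eigenvalue with `‖z‖ = 1` is a root of unity: at a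
coordinate `i` where an eigenvector `e` has maximal modulus, the row `∑ⱼ Qᵢⱼ eⱼ = z eᵢ` is a convex
combination of norm equal to the maximum, which forces `eⱼ = z eᵢ` for some `j`; hence every power
`zᵏ` is one of the finitely many ratios `eⱼ / eᵢ₀`.

Split the characteristic polynomial as `f * g`, with `f` collecting the roots inside the unit disc
and `g ∣ (X ^ p - 1) ^ N` for a common order `p` of the other roots. Bézout for `f` and
`(X ^ p - 1) ^ N` splits the initial vector as `v₁ + v₀` with `(A ^ p - 1) ^ N v₁ = 0` and
`f(A) v₀ = 0`. Boundedness of the powers of `A ^ p` excludes Jordan blocks, so `A ^ p v₁ = v₁`,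
while `Aᵗ v₀` decays geometrically, by induction over the linear factors of `f`. -/

section InnerProduct

variable {ι E : Type*} [Fintype ι] [NormedAddCommGroup E] [InnerProductSpace ℝ E]

theorem eq_sum_smul_of_norm_le_norm_sum_smul {c : ι → ℝ} {e : ι → E}
    (hc : ∀ j, 0 ≤ c j) (hc₁ : ∑ j, c j = 1) (he : ∀ j, ‖e j‖ ≤ ‖∑ j, c j • e j‖)
    {j : ι} (hj : 0 < c j) : e j = ∑ j, c j • e j := by
  set w := ∑ j, c j • e j
  have hinner : ∑ j, c j * inner ℝ (e j) w = ‖w‖ ^ 2 := by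
    simp only [← real_inner_smul_left, ← sum_inner, real_inner_self_eq_norm_sq, w]
  have hterm (j : ι) : c j * ‖e j - w‖ ^ 2 =
      c j * ‖e j‖ ^ 2 - 2 * (c j * inner ℝ (e j) w) + c j * ‖w‖ ^ 2 := by
    rw [norm_sub_sq_real]; ring
  have hvar : ∑ j, c j * ‖e j - w‖ ^ 2 = ∑ j, c j * ‖e j‖ ^ 2 - ‖w‖ ^ 2 := by
    rw [Finset.sum_congr rfl fun j _ => hterm j, Finset.sum_add_distrib, Finset.sum_sub_distrib,
      ← Finset.mul_sum, ← Finset.sum_mul, hinner, hc₁]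
    ring
  have hle : ∑ j, c j * ‖e j - w‖ ^ 2 ≤ 0 := by
    rw [hvar, sub_nonpos]
    calc ∑ j, c j * ‖e j‖ ^ 2 ≤ ∑ j, c j * ‖w‖ ^ 2 := by
          gcongr with j
          · exact hc j
          · exact he j
      _ = ‖w‖ ^ 2 := by rw [← Finset.sum_mul, hc₁, one_mul]
  have hnonneg (j : ι) : 0 ≤ c j * ‖e j - w‖ ^ 2 := mul_nonneg (hc j) (sq_nonneg _)
  have hzero := (Finset.sum_eq_zero_iff_of_nonneg fun j _ => hnonneg j).mp
    (le_antisymm hle (Finset.sum_nonneg fun j _ => hnonneg j)) j (Finset.mem_univ j)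
  simpa [hj.ne', sub_eq_zero] using hzero

end InnerProduct

theorem isOfFinOrder_of_pow_eq_pow {G₀ : Type*} [GroupWithZero G₀] {z : G₀} (hz : z ≠ 0)
    {a b : ℕ} (hab : a < b) (h : z ^ a = z ^ b) : IsOfFinOrder z :=
  isOfFinOrder_iff_pow_eq_one.mpr ⟨b - a, Nat.sub_pos_of_lt hab,
    by rw [pow_sub₀ z hz hab.le, ← h, mul_inv_cancel₀ (pow_ne_zero a hz)]⟩

theorem exists_pos_forall_pow_eq_one {M : Type*} [Monoid M] (s : Finset M)
    (hs : ∀ z ∈ s, IsOfFinOrder z) : ∃ p, 0 < p ∧ ∀ z ∈ s, z ^ p = 1 :=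
  ⟨∏ z ∈ s, orderOf z, Finset.prod_pos fun z hz => (hs z hz).orderOf_pos,
    fun _ hz => orderOf_dvd_iff_pow_eq_one.mp (Finset.dvd_prod_of_mem _ hz)⟩

section ExpDecay

variable {E : Type*} [SeminormedAddCommGroup E]

def ExpDecay (x : ℕ → E) : Prop :=
  ∃ σ C : ℝ, 0 < σ ∧ σ < 1 ∧ ∀ t, ‖x t‖ ≤ C * σ ^ t

theorem expDecay_zero : ExpDecay (fun _ : ℕ => (0 : E)) :=
  ⟨1 / 2, 0, by norm_num, by norm_num, fun t => by simp⟩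

theorem ExpDecay.of_norm_le {F : Type*} [SeminormedAddCommGroup F] {x : ℕ → E} {y : ℕ → F}
    (hx : ExpDecay x) (hxy : ∀ t, ‖y t‖ ≤ ‖x t‖) : ExpDecay y :=
  let ⟨σ, C, hσ₀, hσ₁, hC⟩ := hx
  ⟨σ, C, hσ₀, hσ₁, fun t => (hxy t).trans (hC t)⟩

theorem ExpDecay.of_succ_eq_smul_add {𝕜 : Type*} [NormedField 𝕜] [NormedSpace 𝕜 E]
    {x y : ℕ → E} {z : 𝕜} (hz : ‖z‖ < 1) (hy : ExpDecay y)
    (hx : ∀ t, x (t + 1) = z • x t + y t) : ExpDecay x := by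
  obtain ⟨σ, C, hσ₀, hσ₁, hyC⟩ := hy
  set ρ := (1 + max ‖z‖ σ) / 2
  have hzρ : ‖z‖ < ρ := by have := le_max_left ‖z‖ σ; simp only [ρ]; linarith
  have hσρ : σ ≤ ρ := by have := le_max_right ‖z‖ σ; simp only [ρ]; linarith
  have hρ₁ : ρ < 1 := by have := max_lt hz hσ₁; simp only [ρ]; linarith
  have hC : 0 ≤ C := by simpa using (norm_nonneg _).trans (hyC 0)
  set D := max ‖x 0‖ (C / (ρ - ‖z‖))
  have hCD : C ≤ (ρ - ‖z‖) * D := by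
    rw [← div_le_iff₀' (sub_pos.mpr hzρ)]; exact le_max_right _ _
  refine ⟨ρ, D, hσ₀.trans_le hσρ, hρ₁, fun t => ?_⟩
  induction t with
  | zero => simp [D]
  | succ t ih =>
    calc ‖x (t + 1)‖ ≤ ‖z‖ * ‖x t‖ + ‖y t‖ := by
          rw [hx, ← norm_smul]; exact norm_add_le _ _
      _ ≤ ‖z‖ * (D * ρ ^ t) + C * ρ ^ t := by
          gcongr
          exact (hyC t).trans (by gcongr)
      _ ≤ ‖z‖ * (D * ρ ^ t) + (ρ - ‖z‖) * D * ρ ^ t := by gcongr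
      _ = D * ρ ^ (t + 1) := by ring

theorem ExpDecay.exists_tendsto_exp_mul {x : ℕ → ℝ} (hx : ExpDecay x) :
    ∃ lam : ℝ, 0 < lam ∧ Tendsto (fun t : ℕ => Real.exp (lam * t) * x t) atTop (𝓝 0) := by
  obtain ⟨σ, C, hσ₀, hσ₁, hxC⟩ := hx
  set τ := Real.sqrt σ
  have hτ₀ : 0 < τ := Real.sqrt_pos.mpr hσ₀
  have hτ₁ : τ < 1 := (Real.sqrt_lt' one_pos).mpr (by simpa using hσ₁)
  refine ⟨-Real.log τ, neg_pos.mpr (Real.log_neg hτ₀ hτ₁), ?_⟩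
  have hbound (t : ℕ) : ‖Real.exp (-Real.log τ * t) * x t‖ ≤ C * τ ^ t := by
    have hexp : Real.exp (-Real.log τ * t) = (τ ^ t)⁻¹ := by
      rw [mul_comm, Real.exp_nat_mul, Real.exp_neg, Real.exp_log hτ₀, inv_pow]
    have hσ : σ ^ t = τ ^ t * τ ^ t := by rw [← mul_pow, Real.mul_self_sqrt hσ₀.le]
    rw [norm_mul, Real.norm_of_nonneg (Real.exp_pos _).le, hexp, inv_mul_le_iff₀ (by positivity)]
    calc ‖x t‖ ≤ C * σ ^ t := hxC t
      _ = τ ^ t * (C * τ ^ t) := by rw [hσ]; ring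
  refine squeeze_zero_norm hbound ?_
  simpa using (tendsto_pow_atTop_nhds_zero_of_lt_one hτ₀.le hτ₁).const_mul C

end ExpDecay

namespace Polynomial

theorem isCoprime_prod_X_sub_C_X_pow_sub_one_pow {L : Multiset ℂ} (hL : ∀ z ∈ L, ‖z‖ < 1)
    {p : ℕ} (hp : 0 < p) (N : ℕ) :
    IsCoprime (L.map fun z => X - C z).prod (((X : ℂ[X]) ^ p - 1) ^ N) := by
  rw [isCoprime_iff_aeval_ne_zero_of_isAlgClosed ℂ ℂ]
  intro a
  by_cases ha : ‖a‖ < 1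
  · right
    have hpow : a ^ p ≠ 1 := by
      intro h
      have := pow_lt_one₀ (norm_nonneg a) ha hp.ne'
      rw [← norm_pow, h, norm_one] at this
      exact lt_irrefl _ this
    rw [map_pow]
    exact pow_ne_zero N (by simpa [sub_eq_zero] using hpow)
  · left
    have hf : (L.map fun z => X - C z).prod ≠ 0 :=
      (monic_multiset_prod_of_monic _ _ fun z _ => monic_X_sub_C z).ne_zero
    intro hroot
    have hmem : a ∈ (L.map fun z => X - C z).prod.roots := (mem_roots hf).mpr hroot
    rw [roots_multiset_prod_X_sub_C] at hmem
    exact ha (hL a hmem)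

end Polynomial

namespace Matrix

open Polynomial

variable {n : Type*} [Fintype n] [DecidableEq n]

theorem exists_mulVec_eq_smul_of_isRoot_charpoly {K : Type*} [Field K] {A : Matrix n n K} {z : K}
    (hz : A.charpoly.IsRoot z) :
    ∃ e ≠ 0, A *ᵥ e = z • e := by
  rw [Polynomial.IsRoot, eval_charpoly] at hz
  obtain ⟨e, he₀, he⟩ := exists_mulVec_eq_zero_iff.mpr hz
  refine ⟨e, he₀, ?_⟩
  rw [sub_mulVec, sub_eq_zero, scalar_apply, ← smul_one_eq_diagonal, smul_mulVec,
    one_mulVec] at he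
  exact he.symm

theorem expDecay_pow_mulVec_of_aeval_prod_mulVec_eq_zero {𝕜 : Type*} [NormedField 𝕜]
    (A : Matrix n n 𝕜) {L : Multiset 𝕜} (hL : ∀ z ∈ L, ‖z‖ < 1) {w : n → 𝕜}
    (hw : aeval A (L.map fun z => X - C z).prod *ᵥ w = 0) :
    ExpDecay fun t => A ^ t *ᵥ w := by
  induction L using Multiset.induction_on generalizing w with
  | empty =>
    simp only [Multiset.map_zero, Multiset.prod_zero, map_one, one_mulVec] at hw
    simpa [hw] using expDecay_zero
  | cons z L ih =>
    set w' := A *ᵥ w - z • w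
    have hw' : aeval A (L.map fun z => X - C z).prod *ᵥ w' = 0 := by
      rwa [Multiset.map_cons, Multiset.prod_cons, mul_comm, map_mul, ← mulVec_mulVec, map_sub,
        aeval_X, aeval_C, Algebra.algebraMap_eq_smul_one, sub_mulVec, smul_mulVec,
        one_mulVec] at hw
    refine (ExpDecay.of_succ_eq_smul_add (hL z (Multiset.mem_cons_self z L))
      (ih (fun y hy => hL y (Multiset.mem_cons_of_mem hy)) hw') fun t => ?_)
    rw [pow_succ, ← mulVec_mulVec, show A *ᵥ w = z • w + w' by simp [w'], mulVec_add,
      mulVec_smul]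

theorem mulVec_eq_self_of_mulVec_sub_fixed {𝕜 : Type*} [RCLike 𝕜] {B : Matrix n n 𝕜}
    {x : n → 𝕜} {c : ℝ} (hB : ∀ k, ‖B ^ k *ᵥ x‖ ≤ c) (hfix : B *ᵥ (B *ᵥ x - x) = B *ᵥ x - x) :
    B *ᵥ x = x := by
  set d := B *ᵥ x - x
  have horbit (k : ℕ) : B ^ k *ᵥ x = x + k • d := by
    induction k with
    | zero => simp
    | succ k ih =>
      rw [pow_succ', ← mulVec_mulVec, ih, mulVec_add, mulVec_smul, hfix, succ_nsmul]
      simp only [d]; abel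
  have hbound (k : ℕ) : k * ‖d‖ ≤ c + ‖x‖ := by
    calc k * ‖d‖ = ‖B ^ k *ᵥ x - x‖ := by
          rw [horbit, add_sub_cancel_left, RCLike.norm_nsmul 𝕜, nsmul_eq_mul]
      _ ≤ c + ‖x‖ := (norm_sub_le _ _).trans (by gcongr; exact hB k)
  have hd : d = 0 := by
    by_contra hd
    obtain ⟨k, hk⟩ := exists_nat_gt ((c + ‖x‖) / ‖d‖)
    rw [div_lt_iff₀ (norm_pos_iff.mpr hd)] at hk
    linarith [hbound k]
  exact sub_eq_zero.mp hd

theorem mulVec_eq_self_of_pow_sub_one_mulVec_eq_zero {𝕜 : Type*} [RCLike 𝕜] {B : Matrix n n 𝕜}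
    {c : ℝ} (hB : ∀ k y, ‖B ^ k *ᵥ y‖ ≤ c * ‖y‖) (m : ℕ) {x : n → 𝕜}
    (hx : (B - 1) ^ m *ᵥ x = 0) : B *ᵥ x = x := by
  induction m generalizing x with
  | zero => simp_all
  | succ m ih =>
    have hsub : (B - 1) *ᵥ x = B *ᵥ x - x := by rw [sub_mulVec, one_mulVec]
    refine mulVec_eq_self_of_mulVec_sub_fixed (fun k => hB k x) ?_
    rw [← hsub]
    exact ih (by rwa [mulVec_mulVec, ← pow_succ])

theorem exists_periodic_add_expDecay (A : Matrix n n ℂ) {c : ℝ}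
    (hA : ∀ k y, ‖A ^ k *ᵥ y‖ ≤ c * ‖y‖)
    (hroots : ∀ z ∈ A.charpoly.roots, 1 ≤ ‖z‖ → IsOfFinOrder z) (v : n → ℂ) :
    ∃ p, 0 < p ∧ ∃ v₁ v₀ : n → ℂ, v = v₁ + v₀ ∧ A ^ p *ᵥ v₁ = v₁ ∧
      ExpDecay fun t => A ^ t *ᵥ v₀ := by
  classical
  set r₀ := A.charpoly.roots.filter fun z => ‖z‖ < 1
  set r₁ := A.charpoly.roots.filter fun z => ¬‖z‖ < 1
  set f := (r₀.map fun z => X - C z).prod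
  set g := (r₁.map fun z => X - C z).prod
  have hfg : A.charpoly = f * g := by
    rw [← Multiset.prod_add, ← Multiset.map_add, Multiset.filter_add_not,
      prod_multiset_X_sub_C_of_monic_of_roots_card_eq A.charpoly_monic
        IsAlgClosed.card_roots_eq_natDegree]
  obtain ⟨p, hp, hpow⟩ := exists_pos_forall_pow_eq_one r₁.toFinset fun z hz => by
    have hz := Multiset.mem_toFinset.mp hz
    exact hroots z (Multiset.mem_of_mem_filter hz) (not_lt.mp (Multiset.mem_filter.mp hz).2)
  set h := ((X : ℂ[X]) ^ p - 1) ^ Multiset.card r₁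
  have hgh : g ∣ h := by
    calc g ∣ (r₁.map fun _ => (X : ℂ[X]) ^ p - 1).prod :=
          Multiset.prod_dvd_prod_of_dvd _ _ fun z hz => dvd_iff_isRoot.mpr <| by
            simp [hpow z (Multiset.mem_toFinset.mpr hz)]
      _ = h := by rw [Multiset.map_const', Multiset.prod_replicate]
  have hr₀ : ∀ z ∈ r₀, ‖z‖ < 1 := fun z hz => (Multiset.mem_filter.mp hz).2
  obtain ⟨a, b, hab⟩ := isCoprime_prod_X_sub_C_X_pow_sub_one_pow hr₀ hp (Multiset.card r₁)
  have hann {q : ℂ[X]} (hq : f * h ∣ q) : aeval A q = 0 :=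
    aeval_eq_zero_of_dvd_aeval_eq_zero (hfg ▸ (mul_dvd_mul_left f hgh).trans hq)
      (aeval_self_charpoly A)
  refine ⟨p, hp, aeval A (a * f) *ᵥ v, aeval A (b * h) *ᵥ v, ?_, ?_, ?_⟩
  · rw [← add_mulVec, ← map_add, hab, map_one, one_mulVec]
  · refine mulVec_eq_self_of_pow_sub_one_mulVec_eq_zero (c := c) (fun k y => ?_)
      (Multiset.card r₁) ?_
    · rw [← pow_mul]; exact hA _ y
    · have haeval : (A ^ p - 1) ^ Multiset.card r₁ = aeval A h := by simp [h]
      have hdvd : f * h ∣ h * (a * f) := by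
        rw [mul_comm f]; exact mul_dvd_mul_left h (dvd_mul_left f a)
      rw [haeval, mulVec_mulVec, ← map_mul, hann hdvd, zero_mulVec]
  · refine expDecay_pow_mulVec_of_aeval_prod_mulVec_eq_zero A hr₀ ?_
    rw [mulVec_mulVec, ← map_mul, hann (by rw [mul_left_comm]; exact dvd_mul_left _ _),
      zero_mulVec]

end Matrix

open Matrix

namespace RowStochastic

variable {S : ℕ} {Q : Matrix (Fin S) (Fin S) ℝ}

theorem norm_map_mulVec_le (hQ : RowStochastic Q) (v : Fin S → ℂ) :
    ‖Q.map (↑) *ᵥ v‖ ≤ ‖v‖ := by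
  refine (pi_norm_le_iff_of_nonneg (norm_nonneg v)).mpr fun i => ?_
  calc ‖∑ j, (Q i j : ℂ) * v j‖ ≤ ∑ j, Q i j * ‖v j‖ := by
        refine (norm_sum_le _ _).trans_eq (Finset.sum_congr rfl fun j _ => ?_)
        rw [norm_mul, Complex.norm_real, Real.norm_of_nonneg (hQ.1 i j)]
    _ ≤ ∑ j, Q i j * ‖v‖ := by gcongr with j; exacts [hQ.1 i j, norm_le_pi_norm v j]
    _ = ‖v‖ := by rw [← Finset.sum_mul, hQ.2 i, one_mul]

theorem norm_map_pow_mulVec_le (hQ : RowStochastic Q) (k : ℕ) (v : Fin S → ℂ) :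
    ‖Q.map (↑) ^ k *ᵥ v‖ ≤ ‖v‖ := by
  induction k with
  | zero => simp
  | succ k ih => rw [pow_succ', ← mulVec_mulVec]; exact (hQ.norm_map_mulVec_le _).trans ih

section Eigenvector

variable (hQ : RowStochastic Q) {z : ℂ} {e : Fin S → ℂ} (he : Q.map (↑) *ᵥ e = z • e)
include hQ he

theorem norm_le_one_of_mulVec_eq_smul (he₀ : e ≠ 0) : ‖z‖ ≤ 1 := by
  have : ‖z‖ * ‖e‖ ≤ 1 * ‖e‖ := by
    rw [← norm_smul, ← he, one_mul]; exact hQ.norm_map_mulVec_le e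
  exact le_of_mul_le_mul_right this (norm_pos_iff.mpr he₀)

theorem exists_eq_mul_of_mulVec_eq_smul (hz : ‖z‖ = 1) {i : Fin S}
    (hi : ∀ j, ‖e j‖ ≤ ‖e i‖) : ∃ j, e j = z * e i := by
  have hrow : ∑ j, Q i j • e j = z * e i := by
    simpa [mulVec, dotProduct, Complex.real_smul] using congrFun he i
  obtain ⟨j, hj⟩ : ∃ j, 0 < Q i j := by
    by_contra! hQi
    linarith [Finset.sum_nonpos fun j (_ : j ∈ Finset.univ) => hQi j, hQ.2 i]
  refine ⟨j, hrow ▸ eq_sum_smul_of_norm_le_norm_sum_smul (hQ.1 i) (hQ.2 i) (fun k => ?_) hj⟩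
  rw [hrow, norm_mul, hz, one_mul]
  exact hi k

theorem isOfFinOrder_of_mulVec_eq_smul (he₀ : e ≠ 0) (hz : ‖z‖ = 1) : IsOfFinOrder z := by
  obtain ⟨j₀, hj₀⟩ : ∃ j, e j ≠ 0 := Function.ne_iff.mp he₀
  have : Nonempty (Fin S) := ⟨j₀⟩
  obtain ⟨i₀, hi₀⟩ := Finite.exists_max fun i => ‖e i‖
  have hei₀ : e i₀ ≠ 0 := norm_pos_iff.mp ((norm_pos_iff.mpr hj₀).trans_le (hi₀ j₀))
  have horbit (k : ℕ) : ∃ i, e i = z ^ k * e i₀ := by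
    induction k with
    | zero => exact ⟨i₀, by simp⟩
    | succ k ih =>
      obtain ⟨i, hi⟩ := ih
      have hmax (j : Fin S) : ‖e j‖ ≤ ‖e i‖ := by simpa [hi, hz] using hi₀ j
      obtain ⟨j, hj⟩ := exists_eq_mul_of_mulVec_eq_smul hQ he hz hmax
      exact ⟨j, by rw [hj, hi, pow_succ']; ring⟩
  have hpow (k : ℕ) : z ^ k ∈ Set.range fun i => e i / e i₀ := by
    obtain ⟨i, hi⟩ := horbit k
    exact ⟨i, by simp only [hi, mul_div_cancel_right₀ _ hei₀]⟩
  obtain ⟨a, b, hab, h⟩ := (Set.finite_range _).exists_lt_map_eq_of_forall_mem hpow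
  exact isOfFinOrder_of_pow_eq_pow (norm_pos_iff.mp (hz ▸ one_pos)) hab h

end Eigenvector

end RowStochastic

theorem stmt_12_general (S : ℕ) (Q : Matrix (Fin S) (Fin S) ℝ)
    (hQ : RowStochastic Q) (r : Fin S → ℝ) (s : Fin S) (u : ℕ → ℝ)
    (hu : ∀ t : ℕ, u t = ((Q ^ t).mulVec r) s) :
    ∃ (lam : ℝ) (w Δ : ℕ → ℝ), 0 < lam ∧ EvPeriodic w ∧
      Filter.Tendsto (fun t : ℕ => Real.exp (lam * t) * Δ t) Filter.atTop (nhds 0) ∧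
      u = w + Δ := by
  set A := Q.map ((↑) : ℝ → ℂ)
  have hroots (z : ℂ) (hz : z ∈ A.charpoly.roots) (hz₁ : 1 ≤ ‖z‖) : IsOfFinOrder z := by
    obtain ⟨e, he₀, he⟩ :=
      exists_mulVec_eq_smul_of_isRoot_charpoly (Polynomial.isRoot_of_mem_roots hz)
    exact hQ.isOfFinOrder_of_mulVec_eq_smul he he₀
      (le_antisymm (hQ.norm_le_one_of_mulVec_eq_smul he he₀) hz₁)
  obtain ⟨p, hp, v₁, v₀, hv, hper, hdecay⟩ := A.exists_periodic_add_expDecay (c := 1)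
    (fun k y => by simpa using hQ.norm_map_pow_mulVec_le k y) hroots fun j => (r j : ℂ)
  obtain ⟨lam, hlam, hlim⟩ := (hdecay.of_norm_le (y := fun t => ((A ^ t *ᵥ v₀) s).re)
    fun t => (Complex.abs_re_le_norm _).trans (norm_le_pi_norm _ s)).exists_tendsto_exp_mul
  refine ⟨lam, fun t => ((A ^ t *ᵥ v₁) s).re, _, hlam,
    ⟨p, 0, hp, fun t _ => by simp only [pow_add, ← mulVec_mulVec, hper]⟩, hlim,
    funext fun t => ?_⟩
  have hA : A ^ t = (Q ^ t).map (↑) := (map_pow Complex.ofRealHom.mapMatrix Q t).symm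
  have hut : (u t : ℂ) = (A ^ t *ᵥ fun j => (r j : ℂ)) s := by
    rw [hu, hA]; exact RingHom.map_mulVec Complex.ofRealHom _ r s
  simpa [hv, mulVec_add] using congrArg Complex.re hut

/-- every stream generated by a stationary policy is
asymptotically periodic. -/
theorem stmt_12 (S : ℕ) (hS : 0 < S) (Q : Matrix (Fin S) (Fin S) ℝ)
    (hQ : RowStochastic Q) (r : Fin S → ℝ) (s : Fin S) (u : ℕ → ℝ)
    (hu : ∀ t : ℕ, u t = ((Q ^ t).mulVec r) s) :
    ∃ (lam : ℝ) (w Δ : ℕ → ℝ), 0 < lam ∧ EvPeriodic w ∧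
      Filter.Tendsto (fun t : ℕ => Real.exp (lam * t) * Δ t) Filter.atTop (nhds 0) ∧
      u = w + Δ :=
  stmt_12_general S Q hQ r s u hu
end

section
/- For any S×S row-stochastic matrix P and any vector x ∈ ℝ^S, the sequence P^t·x converges exponentially to a periodic orbit: there exist ρ > 0, p ∈ ℕ with p ≥ 1, T ∈ ℕ, and vectors y(t) ∈ ℝ^S for t ∈ ℕ such that y(t+p) = y(t) for all t ≥ T, and for every s ∈ {1,…,S}, lim_{t→∞} e^{ρt} |(P^t·x − y(t))_s| = 0. -/
open Filter Finset Topology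

/-!
Complexify `P`. In the sup norm it is a contraction, so its eigenvalues lie in the closed unit
disc, and it has no Jordan block at an eigenvalue `μ` with `‖μ‖ = 1`, since such a block would
make an orbit grow linearly. Such a `μ` is moreover a root of unity: at a coordinate `i` where an
eigenvector `v` has maximal modulus, the row equation writes `μ * v i` as a convex combination of
the `v j`, so by strict convexity of `ℂ` it equals one of them; iterating, `μ ^ t * v i` stays in
the finite set of values of `v`. Decomposing `x` into generalized eigenvectors, the components
with `‖μ‖ = 1` thus rotate periodically, while the others decay like `t ^ m * ‖μ‖ ^ t`.
-/

open Matrix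

def ExpAsymptoticallyPeriodic {E : Type*} [NormedAddCommGroup E] (u : ℕ → E) : Prop :=
  ∃ (ρ : ℝ) (p : ℕ) (y : ℕ → E), 0 < ρ ∧ 1 ≤ p ∧ Function.Periodic y p ∧
    Tendsto (fun t : ℕ => Real.exp (ρ * t) * ‖u t - y t‖) atTop (𝓝 0)

namespace ExpAsymptoticallyPeriodic

variable {E F : Type*} [NormedAddCommGroup E] [NormedAddCommGroup F] {u v : ℕ → E}

lemma of_periodic {p : ℕ} (hp : 1 ≤ p) (hu : Function.Periodic u p) :
    ExpAsymptoticallyPeriodic u :=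
  ⟨1, p, u, one_pos, hp, hu, by simp⟩

lemma zero : ExpAsymptoticallyPeriodic fun _ : ℕ => (0 : E) :=
  of_periodic le_rfl fun _ => rfl

lemma of_tendsto_zero {ρ : ℝ} (hρ : 0 < ρ)
    (hu : Tendsto (fun t : ℕ => Real.exp (ρ * t) * ‖u t‖) atTop (𝓝 0)) :
    ExpAsymptoticallyPeriodic u :=
  ⟨ρ, 1, 0, hρ, le_rfl, fun _ => rfl, by simpa using hu⟩

lemma add (hu : ExpAsymptoticallyPeriodic u) (hv : ExpAsymptoticallyPeriodic v) :
    ExpAsymptoticallyPeriodic fun t => u t + v t := by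
  obtain ⟨ρ, p, y, hρ, hp, hy, hu⟩ := hu
  obtain ⟨σ, q, z, hσ, hq, hz, hv⟩ := hv
  refine ⟨min ρ σ, p * q, y + z, lt_min hρ hσ, one_le_mul hp hq, ?_, ?_⟩
  · have hy' : Function.Periodic y (p * q : ℕ) := by simpa [mul_comm] using hy.nat_mul q
    have hz' : Function.Periodic z (p * q : ℕ) := by simpa using hz.nat_mul p
    exact hy'.add hz'
  refine squeeze_zero (fun t => by positivity) (fun t => ?_) (by simpa using hu.add hv)
  calc Real.exp (min ρ σ * t) * ‖u t + v t - (y + z) t‖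
      ≤ Real.exp (min ρ σ * t) * (‖u t - y t‖ + ‖v t - z t‖) := by
        gcongr
        rw [Pi.add_apply, add_sub_add_comm]
        exact norm_add_le _ _
    _ ≤ Real.exp (ρ * t) * ‖u t - y t‖ + Real.exp (σ * t) * ‖v t - z t‖ := by
        rw [mul_add]
        gcongr
        exacts [min_le_left ρ σ, min_le_right ρ σ]

lemma comp {g : E → F} (hg : LipschitzWith 1 g) (hu : ExpAsymptoticallyPeriodic u) :
    ExpAsymptoticallyPeriodic fun t => g (u t) := by
  obtain ⟨ρ, p, y, hρ, hp, hy, hu⟩ := hu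
  refine ⟨ρ, p, g ∘ y, hρ, hp, hy.comp g, squeeze_zero (fun t => by positivity) (fun t => ?_) hu⟩
  gcongr
  simpa [dist_eq_norm] using hg.dist_le_mul (u t) (y t)

end ExpAsymptoticallyPeriodic

lemma exists_pos_exp_mul_lt_one {a : ℝ} (ha : a < 1) : ∃ ρ > 0, Real.exp ρ * a < 1 := by
  have hnear : ∀ᶠ ρ in 𝓝 0, Real.exp ρ * a < 1 :=
    ((Real.continuous_exp.mul continuous_const).tendsto' 0 a (by simp)).eventually_lt_const ha
  obtain ⟨ρ, hρ, hρ0⟩ := ((hnear.filter_mono nhdsWithin_le_nhds).and self_mem_nhdsWithin).exists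
    (f := 𝓝[>] (0 : ℝ))
  exact ⟨ρ, hρ0, hρ⟩

lemma tendsto_pow_mul_choose_mul_pow_sub {c a : ℝ} (hc : 0 ≤ c) (ha : 0 ≤ a) (hca : c * a < 1)
    (j : ℕ) : Tendsto (fun t : ℕ => c ^ t * t.choose j * a ^ (t - j)) atTop (𝓝 0) := by
  rw [← Filter.tendsto_add_atTop_iff_nat j]
  have hsum := summable_choose_mul_geometric_of_norm_lt_one j (r := c * a)
    (by rwa [Real.norm_of_nonneg (by positivity)])
  convert hsum.tendsto_atTop_zero.const_mul (c ^ j) using 1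
  · funext t
    rw [Nat.add_sub_cancel, pow_add, mul_pow]
    ring
  · simp

section Contraction

variable {E : Type*} [NormedAddCommGroup E] [NormedSpace ℂ E] {f : Module.End ℂ E}

lemma norm_pow_apply_le (hf : ∀ v, ‖f v‖ ≤ ‖v‖) (t : ℕ) (v : E) : ‖(f ^ t) v‖ ≤ ‖v‖ := by
  induction t generalizing v with
  | zero => simp
  | succ t ih =>
    rw [pow_succ, Module.End.mul_apply]
    exact (ih (f v)).trans (hf v)

lemma norm_le_one_of_hasEigenvalue (hf : ∀ v, ‖f v‖ ≤ ‖v‖) {μ : ℂ} (h : f.HasEigenvalue μ) :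
    ‖μ‖ ≤ 1 := by
  obtain ⟨v, hv, hv0⟩ := h.exists_hasEigenvector
  have hfv := hf v
  rw [Module.End.mem_eigenspace_iff.1 hv, norm_smul] at hfv
  exact (mul_le_iff_le_one_left (norm_pos_iff.2 hv0)).1 hfv

lemma eq_zero_of_apply_eq_add (hf : ∀ v, ‖f v‖ ≤ ‖v‖) {u v : E} (hu : f u = u)
    (hv : f v = v + u) : u = 0 := by
  have horbit : ∀ t : ℕ, (f ^ t) v = v + t • u := by
    intro t
    induction t with
    | zero => simp
    | succ t ih =>
      rw [pow_succ', Module.End.mul_apply, ih, map_add, map_nsmul, hv, hu, succ_nsmul]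
      abel
  have hbound : ∀ t : ℕ, t * ‖u‖ ≤ 2 * ‖v‖ := fun t => by
    have h := norm_pow_apply_le hf t v
    rw [horbit] at h
    calc t * ‖u‖ = ‖(v + t • u) - v‖ := by
          rw [add_sub_cancel_left, RCLike.norm_nsmul ℂ, nsmul_eq_mul]
      _ ≤ ‖v + t • u‖ + ‖v‖ := norm_sub_le _ _
      _ ≤ 2 * ‖v‖ := by linarith
  by_contra hu0
  obtain ⟨t, ht⟩ := exists_nat_gt (2 * ‖v‖ / ‖u‖)
  rw [div_lt_iff₀ (norm_pos_iff.2 hu0)] at ht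
  linarith [hbound t]

lemma apply_eq_smul_of_mem_maxGenEigenspace (hf : ∀ v, ‖f v‖ ≤ ‖v‖) {μ : ℂ} (hμ : ‖μ‖ = 1)
    {v : E} (hv : v ∈ f.maxGenEigenspace μ) : f v = μ • v := by
  have hμ0 : μ ≠ 0 := by
    rintro rfl
    simp at hμ
  obtain ⟨k, hk⟩ := (f.mem_maxGenEigenspace μ v).1 hv
  clear hv
  induction k generalizing v with
  | zero => simp_all
  | succ k ih =>
    set u := (f - μ • 1) v
    have hu : f u = μ • u := ih (by rwa [← Module.End.mul_apply, ← pow_succ])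
    -- rescaling by `μ⁻¹` turns the Jordan chain `v ↦ u` into one at the eigenvalue `1`
    have hu0 : μ⁻¹ • u = 0 := by
      refine eq_zero_of_apply_eq_add (f := μ⁻¹ • f) (v := v) (fun w => ?_) ?_ ?_
      · simpa [norm_smul, hμ] using hf w
      · simp [hu, smul_smul, hμ0]
      · simp [u, smul_sub, smul_smul, hμ0]
    rw [smul_eq_zero_iff_right (inv_ne_zero hμ0)] at hu0
    simpa [u, sub_eq_zero] using hu0

lemma pow_apply_eq_sum_of_pow_sub_smul_apply_eq_zero {μ : ℂ} {m : ℕ} {v : E}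
    (hv : ((f - μ • 1) ^ m) v = 0) (t : ℕ) :
    (f ^ t) v = ∑ j ∈ range m, (t.choose j * μ ^ (t - j)) • ((f - μ • 1) ^ j) v := by
  set N := f - μ • 1
  have hN : ∀ j, m ≤ j → (N ^ j) v = 0 := fun j hj => by
    rw [← Nat.sub_add_cancel hj, pow_add, Module.End.mul_apply, hv, map_zero]
  have hterm : ∀ j, (N ^ j * (μ • 1) ^ (t - j) * (t.choose j : Module.End ℂ E)) v =
      (t.choose j * μ ^ (t - j)) • (N ^ j) v := fun j => by
    simp [smul_pow, mul_smul, Nat.cast_smul_eq_nsmul, smul_comm (μ ^ (t - j))]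
  -- both sums agree with the one over `range (t + 1 + m)`: beyond `t` the binomial
  -- coefficient vanishes, and beyond `m` the power of `N` kills `v`
  rw [show f = N + μ • 1 by simp [N], ((Commute.one_right N).smul_right μ).add_pow,
    LinearMap.sum_apply, sum_congr rfl fun j _ => hterm j]
  rw [sum_subset (range_mono (by omega : t + 1 ≤ t + 1 + m)) fun j _ hj => by
      rw [Nat.choose_eq_zero_of_lt (by simpa using hj)]; simp,
    sum_subset (range_mono (by omega : m ≤ t + 1 + m)) fun j _ hj => by
      rw [hN j (by simpa using hj), smul_zero]]

lemma tendsto_pow_mul_norm_pow_apply_of_mem_maxGenEigenspace {μ : ℂ} {c : ℝ} (hc : 0 ≤ c)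
    (hcμ : c * ‖μ‖ < 1) {v : E} (hv : v ∈ f.maxGenEigenspace μ) :
    Tendsto (fun t : ℕ => c ^ t * ‖(f ^ t) v‖) atTop (𝓝 0) := by
  obtain ⟨m, hm⟩ := (f.mem_maxGenEigenspace μ v).1 hv
  have hterms := tendsto_finsetSum (range m) fun j _ =>
    (tendsto_pow_mul_choose_mul_pow_sub hc (norm_nonneg μ) hcμ j).mul_const ‖((f - μ • 1) ^ j) v‖
  refine squeeze_zero (fun t => by positivity) (fun t => ?_) (by simpa using hterms)
  rw [pow_apply_eq_sum_of_pow_sub_smul_apply_eq_zero hm]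
  calc c ^ t * ‖∑ j ∈ range m, (t.choose j * μ ^ (t - j)) • ((f - μ • 1) ^ j) v‖
      ≤ c ^ t * ∑ j ∈ range m, ‖(t.choose j * μ ^ (t - j)) • ((f - μ • 1) ^ j) v‖ := by
        gcongr
        exact norm_sum_le _ _
    _ = _ := by
        rw [mul_sum]
        refine sum_congr rfl fun j _ => ?_
        rw [norm_smul, norm_mul, norm_pow, Complex.norm_natCast]
        ring

lemma expAsymptoticallyPeriodic_pow_apply_of_mem_maxGenEigenspace (hf : ∀ v, ‖f v‖ ≤ ‖v‖)
    (hper : ∀ μ : ℂ, ‖μ‖ = 1 → f.HasEigenvalue μ → IsOfFinOrder μ) {μ : ℂ} {v : E}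
    (hv : v ∈ f.maxGenEigenspace μ) : ExpAsymptoticallyPeriodic fun t : ℕ => (f ^ t) v := by
  rcases eq_or_ne v 0 with rfl | hv0
  · simpa using ExpAsymptoticallyPeriodic.zero
  have hμ : f.HasEigenvalue μ :=
    (Module.End.hasUnifEigenvalue_iff_hasUnifEigenvalue_one ENat.top_pos).1
      (Module.End.HasUnifEigenvector.hasUnifEigenvalue ⟨hv, hv0⟩)
  rcases (norm_le_one_of_hasEigenvalue hf hμ).eq_or_lt with h1 | h1
  · have heig : f.HasEigenvector μ v :=
      ⟨Module.End.mem_eigenspace_iff.2 (apply_eq_smul_of_mem_maxGenEigenspace hf h1 hv), hv0⟩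
    refine .of_periodic (hper μ h1 hμ).orderOf_pos fun t => ?_
    rw [heig.pow_apply, heig.pow_apply, pow_add, pow_orderOf_eq_one, mul_one]
  · obtain ⟨ρ, hρ, hρμ⟩ := exists_pos_exp_mul_lt_one h1
    refine .of_tendsto_zero hρ
      ((tendsto_pow_mul_norm_pow_apply_of_mem_maxGenEigenspace (Real.exp_pos ρ).le hρμ hv).congr
        fun t => ?_)
    rw [mul_comm ρ, Real.exp_nat_mul]

theorem expAsymptoticallyPeriodic_pow_apply [FiniteDimensional ℂ E] (hf : ∀ v, ‖f v‖ ≤ ‖v‖)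
    (hper : ∀ μ : ℂ, ‖μ‖ = 1 → f.HasEigenvalue μ → IsOfFinOrder μ) (v : E) :
    ExpAsymptoticallyPeriodic fun t : ℕ => (f ^ t) v := by
  have hv : v ∈ ⨆ μ, f.maxGenEigenspace μ := by
    rw [Module.End.iSup_maxGenEigenspace_eq_top]
    trivial
  refine Submodule.iSup_induction _
    (motive := fun w => ExpAsymptoticallyPeriodic fun t => (f ^ t) w) hv
    (fun μ w hw => expAsymptoticallyPeriodic_pow_apply_of_mem_maxGenEigenspace hf hper hw)
    (by simpa using ExpAsymptoticallyPeriodic.zero) fun w₁ w₂ h₁ h₂ => ?_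
  simpa using h₁.add h₂

end Contraction

lemma exists_eq_sum_smul_of_norm_le_norm_sum {ι V : Type*} [Fintype ι] [NormedAddCommGroup V]
    [NormedSpace ℝ V] [StrictConvexSpace ℝ V] {w : ι → ℝ} {z : ι → V} (h0 : ∀ i, 0 ≤ w i)
    (h1 : ∑ i, w i = 1) (hz : ∀ i, ‖z i‖ ≤ ‖∑ i, w i • z i‖) : ∃ i, z i = ∑ i, w i • z i := by
  obtain ⟨i, hi⟩ : ∃ i, w i ≠ 0 := by
    by_contra! h
    simp [h] at h1
  have hconst : ∀ j, w j ≠ 0 → z j = z i := fun j hj => by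
    by_contra hne
    exact (norm_sum_lt_of_strictConvexSpace (fun k _ => h0 k) h1 (mem_univ j) (mem_univ i) hne
      hj hi fun k _ => hz k).false
  refine ⟨i, ?_⟩
  calc z i = ∑ j, w j • z i := by rw [← Finset.sum_smul, h1, one_smul]
    _ = ∑ j, w j • z j := Finset.sum_congr rfl fun j _ => by
        rcases eq_or_ne (w j) 0 with hj | hj
        · simp [hj]
        · rw [hconst j hj]

lemma map_ofReal_mulVec_apply {n : Type*} [Fintype n] (M : Matrix n n ℝ) (v : n → ℂ) (i : n) :
    (M.map Complex.ofReal *ᵥ v) i = ∑ j, M i j • v j := by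
  simp [Matrix.mulVec, dotProduct, Complex.real_smul]

section Stochastic

variable {n : Type*} [Fintype n] [DecidableEq n] {M : Matrix n n ℝ}

lemma RowStochastic.mem_rowStochastic {S : ℕ} {P : Matrix (Fin S) (Fin S) ℝ}
    (hP : RowStochastic P) : P ∈ Matrix.rowStochastic ℝ (Fin S) :=
  Matrix.mem_rowStochastic_iff_sum.2 hP

lemma norm_map_ofReal_mulVec_le (hM : M ∈ Matrix.rowStochastic ℝ n) (v : n → ℂ) :
    ‖M.map Complex.ofReal *ᵥ v‖ ≤ ‖v‖ := by
  refine (pi_norm_le_iff_of_nonneg (norm_nonneg v)).2 fun i => ?_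
  rw [map_ofReal_mulVec_apply M, ← mem_closedBall_zero_iff]
  exact (convex_closedBall 0 ‖v‖).sum_mem (fun j _ => Matrix.nonneg_of_mem_rowStochastic hM)
    (Matrix.sum_row_of_mem_rowStochastic hM i)
    fun j _ => mem_closedBall_zero_iff.2 (norm_le_pi_norm v j)

lemma exists_eq_mul_of_mulVec_eq_smul (hM : M ∈ Matrix.rowStochastic ℝ n) {μ : ℂ}
    (hμ : ‖μ‖ = 1) {v : n → ℂ} (hv : M.map Complex.ofReal *ᵥ v = μ • v) {i : n}
    (hi : ∀ j, ‖v j‖ ≤ ‖v i‖) : ∃ j, v j = μ * v i := by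
  have hrow : μ * v i = ∑ j, M i j • v j := by
    rw [← map_ofReal_mulVec_apply M, hv]
    rfl
  rw [hrow]
  refine exists_eq_sum_smul_of_norm_le_norm_sum (fun j => Matrix.nonneg_of_mem_rowStochastic hM)
    (Matrix.sum_row_of_mem_rowStochastic hM i) fun j => ?_
  rw [← hrow, norm_mul, hμ, one_mul]
  exact hi j

lemma isOfFinOrder_of_hasEigenvalue (hM : M ∈ Matrix.rowStochastic ℝ n) {μ : ℂ}
    (hμ : ‖μ‖ = 1) (h : Module.End.HasEigenvalue (toLin' (M.map Complex.ofReal)) μ) :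
    IsOfFinOrder μ := by
  obtain ⟨v, hv, hv0⟩ := h.exists_hasEigenvector
  replace hv : M.map Complex.ofReal *ᵥ v = μ • v := by
    simpa using Module.End.mem_eigenspace_iff.1 hv
  obtain ⟨a, ha⟩ := Function.ne_iff.1 hv0
  have : Nonempty n := ⟨a⟩
  obtain ⟨i, hi⟩ := Finite.exists_max fun j => ‖v j‖
  have hvi : v i ≠ 0 := norm_pos_iff.1 ((norm_pos_iff.2 ha).trans_le (hi a))
  have horbit : ∀ t : ℕ, ∃ j, v j = μ ^ t * v i := by
    intro t
    induction t with
    | zero => exact ⟨i, by simp⟩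
    | succ t ih =>
      obtain ⟨j, hj⟩ := ih
      obtain ⟨k, hk⟩ := exists_eq_mul_of_mulVec_eq_smul hM hμ hv (i := j) fun l => by
        rw [hj, norm_mul, norm_pow, hμ, one_pow, one_mul]
        exact hi l
      exact ⟨k, by rw [hk, hj, pow_succ]; ring⟩
  choose j hj using horbit
  have hμ0 : μ ≠ 0 := by
    rintro rfl
    simp at hμ
  rw [← Units.val_mk0 hμ0, Units.isOfFinOrder_val]
  by_contra hfin
  refine not_injective_infinite_finite j fun a b hab =>
    injective_pow_iff_not_isOfFinOrder.2 hfin (Units.ext ?_)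
  simpa using mul_right_cancel₀ hvi ((hj a).symm.trans ((congrArg v hab).trans (hj b)))

lemma pow_mulVec_eq_re (M : Matrix n n ℝ) (x : n → ℝ) (t : ℕ) :
    (M ^ t) *ᵥ x = fun s => ((toLin' (M.map Complex.ofReal) ^ t) (Complex.ofReal ∘ x) s).re := by
  funext s
  have h := RingHom.map_mulVec Complex.ofRealHom (M ^ t) x s
  rw [Matrix.map_pow] at h
  rw [← toLin'_pow, toLin'_apply]
  exact congrArg Complex.re h

end Stochastic

lemma lipschitzWith_one_re_pi {n : Type*} [Fintype n] :
    LipschitzWith 1 fun (w : n → ℂ) (s : n) => (w s).re := by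
  refine LipschitzWith.of_dist_le_mul fun w₁ w₂ => ?_
  rw [NNReal.coe_one, one_mul, dist_pi_le_iff dist_nonneg]
  intro s
  calc dist (w₁ s).re (w₂ s).re ≤ dist (w₁ s) (w₂ s) := by
        simpa [Real.dist_eq, Complex.dist_eq] using Complex.abs_re_le_norm (w₁ s - w₂ s)
    _ ≤ dist w₁ w₂ := dist_le_pi_dist w₁ w₂ s

theorem stmt_13_general (S : ℕ) (P : Matrix (Fin S) (Fin S) ℝ)
    (hP : RowStochastic P) (x : Fin S → ℝ) :
    ∃ (ρ : ℝ) (p T : ℕ) (y : ℕ → Fin S → ℝ), 0 < ρ ∧ 1 ≤ p ∧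
      (∀ t, T ≤ t → y (t + p) = y t) ∧
      ∀ s : Fin S,
        Filter.Tendsto (fun t : ℕ => Real.exp (ρ * t) * |((P ^ t).mulVec x) s - y t s|)
          Filter.atTop (nhds 0) := by
  have hP' := hP.mem_rowStochastic
  obtain ⟨ρ, p, y, hρ, hp, hy, hlim⟩ :=
    (expAsymptoticallyPeriodic_pow_apply (norm_map_ofReal_mulVec_le hP')
      (fun μ hμ => isOfFinOrder_of_hasEigenvalue hP' hμ) (Complex.ofReal ∘ x)).comp
      lipschitzWith_one_re_pi
  refine ⟨ρ, p, 0, y, hρ, hp, fun t _ => hy t, fun s =>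
    squeeze_zero (fun t => by positivity) (fun t => ?_) hlim⟩
  gcongr
  refine le_trans ?_ (norm_le_pi_norm _ s)
  simp [pow_mulVec_eq_re]

/-- for a row-stochastic matrix `P`, the sequence `P^t · x`
converges exponentially to a periodic orbit. -/
theorem stmt_13 (S : ℕ) (hS : 0 < S) (P : Matrix (Fin S) (Fin S) ℝ)
    (hP : RowStochastic P) (x : Fin S → ℝ) :
    ∃ (ρ : ℝ) (p T : ℕ) (y : ℕ → Fin S → ℝ), 0 < ρ ∧ 1 ≤ p ∧
      (∀ t, T ≤ t → y (t + p) = y t) ∧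
      ∀ s : Fin S,
        Filter.Tendsto (fun t : ℕ => Real.exp (ρ * t) * |((P ^ t).mulVec x) s - y t s|)
          Filter.atTop (nhds 0) :=
  stmt_13_general S P hP x
end
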